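/- arXiv:1809.00133 — 4 statements merged into one kernel-verified Lean document; each statement's English description precedes it below -/
import Mathlib

section
/- If I has linear relations, then the syzygy graph G_I is a connected graph. -/
open MvPolynomial Finset

attribute [local instance] Classical.propDecidable

/-- The (first linear) syzygy graph of a squarefree monomial ideal whose generators
have supports `F i`, all of cardinality `d`: vertices are the generators, and two
generators are adjacent iff their supports meet in `d - 1` elements (equivalently,
there are variables `x, y` with `x * u i = y * u j`). -/
def syzGraph {n m : ℕ} (F : Fin m → Finset (Fin n)) (d : ℕ) : SimpleGraph (Fin m) where
  Adj i j := i ≠ j ∧ (F i ∩ F j).card + 1 = d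
  symm := by
    constructor
    intro i j h
    exact ⟨h.1.symm, by rw [Finset.inter_comm]; exact h.2⟩
  loopless := by constructor; intro i h; exact h.1 rfl

/-- The map `φ : S^ι → S`, `e i ↦ u i`. -/
noncomputable def phi {R : Type*} [CommRing R] {ι : Type*} [Fintype ι] (u : ι → R) :
    (ι → R) →ₗ[R] R where
  toFun c := ∑ i, c i * u i
  map_add' a b := by simp [add_mul, Finset.sum_add_distrib]
  map_smul' r a := by simp [Finset.mul_sum, mul_assoc]

/-- The set of linear syzygies `x_a e_i - x_b e_j` with `x_a u_i = x_b u_j`. -/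
def linSyz {k : Type*} [Field k] {n : ℕ} {ι : Type*} [DecidableEq ι]
    (u : ι → MvPolynomial (Fin n) k) : Set (ι → MvPolynomial (Fin n) k) :=
  { w | ∃ (i j : ι) (a b : Fin n), X a * u i = X b * u j ∧
      w = Pi.single i (X a) - Pi.single j (X b) }

/-- `I = (u i : i)` has linear relations: `ker φ` is generated by the linear syzygies. -/
def HasLinRel {k : Type*} [Field k] {n : ℕ} {ι : Type*} [Fintype ι] [DecidableEq ι]
    (u : ι → MvPolynomial (Fin n) k) : Prop :=
  Submodule.span (MvPolynomial (Fin n) k) (linSyz u) = LinearMap.ker (phi u)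

/-- `I = (u 1, …, u m)` has linear quotients: for some ordering of the generators, each
colon ideal `(u_{σ 1}, …, u_{σ (i-1)}) : u_{σ i}` is generated by a subset of the variables. -/
def LinQuot {k : Type*} [Field k] {n m : ℕ} (u : Fin m → MvPolynomial (Fin n) k) : Prop :=
  ∃ σ : Equiv.Perm (Fin m), ∀ i : Fin m, i.val ≠ 0 →
    ∃ T : Set (Fin n),
      Submodule.colon (Ideal.span ((fun j => u (σ j)) '' {j : Fin m | j < i}))
        (Ideal.span {u (σ i)}) = Ideal.span (X '' T)

/-- Variable-decomposability of a monomial ideal given by its (finite) minimal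
generating set `G`: either `G` is a singleton (principal ideal), or there is a shedding
variable `x l` such that both `I_{x l}` and `I^{x l}` are variable-decomposable. -/
inductive VarDecomp {k : Type*} [Field k] {n : ℕ} :
    Finset (MvPolynomial (Fin n) k) → Prop
  | principal (u : MvPolynomial (Fin n) k) : VarDecomp {u}
  | shed (G : Finset (MvPolynomial (Fin n) k)) (l : Fin n)
      (hne : (G.filter fun u => ¬ X l ∣ u).Nonempty)
      (hshed : ∀ u ∈ G.filter (fun u => ¬ X l ∣ u),
        ∃ v ∈ G.filter (fun u => X l ∣ u),
          Submodule.colon (Ideal.span {v}) (Ideal.span {u}) = Ideal.span {X l})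
      (h1 : VarDecomp (G.filter fun u => ¬ X l ∣ u))
      (h2 : VarDecomp (G.filter fun u => X l ∣ u)) : VarDecomp G

/-! Fix a generator `v` and cut `u` down to the connected component of `v` in `G_I`. Every
linear syzygy is supported on an edge of `G_I` (or a single vertex), so the cut-down map still
kills it, and hence kills all of `ker φ` when the linear syzygies generate it. But the Koszul
syzygy `u_j e_v - u_v e_j` is sent to `u_j u_v ≠ 0` when `j` lies outside the component of `v`.
-/

theorem MvPolynomial.multiset_prod_X_eq_monomial {σ R : Type*} [CommSemiring R] [DecidableEq σ]
    (s : Multiset σ) :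
    (s.map (X : σ → MvPolynomial σ R)).prod = monomial (Multiset.toFinsupp s) 1 := by
  induction s using Multiset.induction_on with
  | empty => simp
  | cons a s ih =>
    rw [Multiset.map_cons, Multiset.prod_cons, ih, ← Multiset.singleton_add,
      Multiset.toFinsupp_add, Multiset.toFinsupp_singleton, X, monomial_mul, one_mul]

theorem MvPolynomial.multiset_prod_X_injective {σ R : Type*} [CommSemiring R] [Nontrivial R] :
    Function.Injective fun s : Multiset σ => (s.map (X : σ → MvPolynomial σ R)).prod := by
  classical
  intro s t hst
  simp only [multiset_prod_X_eq_monomial, monomial_left_inj one_ne_zero] at hst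
  exact Multiset.toFinsupp.injective hst

theorem Finset.card_inter_add_one_of_cons_val_eq {α : Type*} [DecidableEq α]
    {s t : Finset α} {a b : α} (h : a ::ₘ s.val = b ::ₘ t.val) (hst : s ≠ t) :
    (s ∩ t).card + 1 = s.card := by
  obtain ⟨rfl, hval⟩ | ⟨hab, c, hs, ht⟩ := Multiset.cons_eq_cons.1 h
  · exact absurd (Finset.val_injective hval) hst
  have hb : b ∉ a ::ₘ c := by
    have := s.nodup
    rw [hs, Multiset.nodup_cons] at this
    simpa [Ne.symm hab] using this.1
  have hinter : (s ∩ t).val = c := by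
    rw [Finset.inter_val, hs, ht, Multiset.cons_inter_of_neg _ hb,
      Multiset.inter_le_left.antisymm (Multiset.le_inter le_rfl (Multiset.le_cons_self c a))]
  rw [Finset.card_def, hinter, Finset.card_def, hs, Multiset.card_cons]

theorem MvPolynomial.X_mul_prod_X_eq_iff_cons_val_eq {σ R : Type*} [CommSemiring R]
    [Nontrivial R]
    {s t : Finset σ} {a b : σ} :
    X a * ∏ l ∈ s, (X l : MvPolynomial σ R) = X b * ∏ l ∈ t, X l ↔
      a ::ₘ s.val = b ::ₘ t.val := by
  simp only [Finset.prod_eq_multiset_prod, ← Multiset.prod_cons, ← Multiset.map_cons]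
  exact (MvPolynomial.multiset_prod_X_injective (R := R)).eq_iff

section Connectivity

variable {R ι : Type*} [CommRing R] [Fintype ι] [DecidableEq ι]

theorem phi_single (u : ι → R) (i : ι) (p : R) : phi u (Pi.single i p) = p * u i := by
  change ∑ j, (Pi.single i p : ι → R) j * u j = p * u i
  rw [Fintype.sum_eq_single i fun j hj => by rw [Pi.single_eq_of_ne hj, zero_mul],
    Pi.single_eq_same]

theorem SimpleGraph.connected_of_span_eq_ker_phi [IsDomain R] [Nonempty ι] {u : ι → R}
    (hu : ∀ i, u i ≠ 0) {G : SimpleGraph ι} {S : Set (ι → R)}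
    (hS : Submodule.span R S = LinearMap.ker (phi u))
    (hSG : ∀ w ∈ S, ∀ i j, w i ≠ 0 → w j ≠ 0 → G.Reachable i j) : G.Connected := by
  obtain ⟨v⟩ := ‹Nonempty ι›
  let u' : ι → R := fun i => if G.Reachable v i then u i else 0
  have hS' : ∀ w ∈ S, phi u' w = 0 := by
    intro w hw
    by_cases hwv : ∃ i, G.Reachable v i ∧ w i ≠ 0
    · obtain ⟨i, hvi, hwi⟩ := hwv
      have hwu : phi u w = 0 := by
        rw [← LinearMap.mem_ker, ← hS]
        exact Submodule.subset_span hw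
      rw [← hwu]
      refine Finset.sum_congr rfl fun j _ => ?_
      by_cases hwj : w j = 0
      · simp [hwj]
      · simp [u', hvi.trans (hSG w hw i j hwi hwj)]
    · push Not at hwv
      refine Finset.sum_eq_zero fun j _ => ?_
      by_cases hvj : G.Reachable v j
      · simp [hwv j hvj]
      · simp [u', hvj]
  have hker : LinearMap.ker (phi u) ≤ LinearMap.ker (phi u') := by
    rw [← hS]
    exact Submodule.span_le.2 hS'
  have hreach : ∀ j, G.Reachable v j := by
    intro j
    by_contra hvj
    have hkoszul : Pi.single v (u j) - Pi.single j (u v) ∈ LinearMap.ker (phi u) := by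
      rw [LinearMap.mem_ker, map_sub, phi_single, phi_single, mul_comm, sub_self]
    have := hker hkoszul
    rw [LinearMap.mem_ker, map_sub, phi_single, phi_single] at this
    simp only [u', SimpleGraph.Reachable.rfl, if_true, hvj, if_false, mul_zero, sub_zero] at this
    exact mul_ne_zero (hu j) (hu v) this
  exact ⟨fun i j => (hreach i).symm.trans (hreach j)⟩

end Connectivity

theorem syzGraph_adj_of_X_mul_prod_eq {k : Type*} [CommSemiring k] [Nontrivial k]
    {n m d : ℕ} {F : Fin m → Finset (Fin n)} (hcard : ∀ i, (F i).card = d)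
    {i j : Fin m} (hij : F i ≠ F j) {a b : Fin n}
    (h : X a * ∏ l ∈ F i, (X l : MvPolynomial (Fin n) k) = X b * ∏ l ∈ F j, X l) :
    (syzGraph F d).Adj i j :=
  ⟨fun e => hij (congrArg F e), hcard i ▸
    Finset.card_inter_add_one_of_cons_val_eq (X_mul_prod_X_eq_iff_cons_val_eq.1 h) hij⟩

theorem syzGraph_reachable_of_mem_linSyz {k : Type*} [Field k] {n m d : ℕ}
    {F : Fin m → Finset (Fin n)} (hinj : Function.Injective F) (hcard : ∀ i, (F i).card = d)
    {w : Fin m → MvPolynomial (Fin n) k} (hw : w ∈ linSyz fun i => ∏ l ∈ F i, X l)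
    (p q : Fin m) (hp : w p ≠ 0) (hq : w q ≠ 0) : (syzGraph F d).Reachable p q := by
  obtain ⟨i, j, a, b, hab, rfl⟩ := hw
  have hsupp : ∀ r, (Pi.single i (X a) - Pi.single j (X b) : Fin m → MvPolynomial (Fin n) k) r
      ≠ 0 → r = i ∨ r = j := by
    intro r hr
    by_contra! hne
    simp [Pi.single_eq_of_ne hne.1, Pi.single_eq_of_ne hne.2] at hr
  by_cases hij : i = j
  · subst hij
    obtain rfl | rfl := hsupp p hp <;> obtain rfl | rfl := hsupp q hq <;> rfl
  have hadj := syzGraph_adj_of_X_mul_prod_eq hcard (hinj.ne hij) hab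
  obtain rfl | rfl := hsupp p hp <;> obtain rfl | rfl := hsupp q hq
  exacts [.rfl, hadj.reachable, hadj.symm.reachable, .rfl]

/-- If `I` has linear relations, then the syzygy graph `G_I` is connected. -/
theorem stmt1 {k : Type*} [Field k] {n m d : ℕ} (hm : 0 < m)
    (F : Fin m → Finset (Fin n)) (hinj : Function.Injective F)
    (hcard : ∀ i, (F i).card = d)
    (h : HasLinRel (fun i : Fin m => ∏ l ∈ F i, (X l : MvPolynomial (Fin n) k))) :
    (syzGraph F d).Connected :=
  have : Nonempty (Fin m) := ⟨⟨0, hm⟩⟩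
  SimpleGraph.connected_of_span_eq_ker_phi
    (fun _ => Finset.prod_ne_zero_iff.2 fun l _ => X_ne_zero l) h
    fun _ hw => syzGraph_reachable_of_mem_linSyz hinj hcard hw
end

section
/- Assume that every variable x_i divides at least one but not all of the minimal generators of I, and that the syzygy graph G_I is isomorphic to the cycle C_m with m ≥ 4. If d + 2 < n or m ≠ n, then I does not have linear quotients. -/
open MvPolynomial Finset

attribute [local instance] Classical.propDecidable

/-!
Under linear quotients, for every generator `u_v` and every earlier `u_w` there is an earlier
`u_{w'}` with `F w' \ F v = {a}` and `a ∈ F w`; such a `w'` is a neighbour of `v` in the cycle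
`G_I`. Counting the edges of the cycle by their later endpoint shows that every generator but the
last has at most one earlier neighbour, so each generator other than the first and the last
contributes a variable lying in all earlier supports but not in its own. These `m - 2` variables
are distinct and lie in the support of the first generator, so `m ≤ d + 2`. On the other hand two
non-adjacent generators force `d + 2 ≤ n`, and `n ≤ m` because each `F i \ F (i + 1)` is a single
variable while every variable leaves the support somewhere along the cycle. Hence
`m = n = d + 2`.
-/

section SquarefreeMonomial

variable {R σ : Type*} [CommSemiring R]

theorem prod_X_eq_monomial_sum_single (s : Finset σ) :
    ∏ l ∈ s, (X l : MvPolynomial σ R) = monomial (∑ l ∈ s, Finsupp.single l 1) 1 :=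
  (monomial_sum_one s _).symm

theorem sum_single_one_apply (s : Finset σ) (a : σ) :
    (∑ l ∈ s, Finsupp.single l 1 : σ →₀ ℕ) a = if a ∈ s then 1 else 0 := by
  simp [Finsupp.finsetSum_apply, Finsupp.single_apply]

theorem sum_single_one_le_iff {s t : Finset σ} :
    (∑ l ∈ s, Finsupp.single l 1 : σ →₀ ℕ) ≤ ∑ l ∈ t, Finsupp.single l 1 ↔ s ⊆ t := by
  simp only [Finsupp.le_def, sum_single_one_apply]
  refine ⟨fun h a ha => ?_, fun h a => ?_⟩
  · by_contra hat
    simpa [ha, hat] using h a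
  · by_cases ha : a ∈ s
    · simp [ha, h ha]
    · simp [ha]

theorem exists_subset_insert_of_colon_eq_span_X [Nontrivial R] [DecidableEq σ] {ι : Type*}
    (F : ι → Finset σ) {s : Set ι} {v w : ι} {T : Set σ}
    (hT : Submodule.colon (Ideal.span ((fun i => ∏ l ∈ F i, (X l : MvPolynomial σ R)) '' s))
        (Ideal.span {∏ l ∈ F v, (X l : MvPolynomial σ R)}) = Ideal.span (X '' T)) (hw : w ∈ s) :
    ∃ a ∈ F w \ F v, ∃ w' ∈ s, F w' ⊆ insert a (F v) := by
  have hquot : ∏ l ∈ F w \ F v, (X l : MvPolynomial σ R) ∈ Ideal.span (X '' T) := by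
    rw [← hT, Ideal.mem_colon_span_singleton, ← prod_union sdiff_disjoint,
      sdiff_union_self_eq_union]
    exact Ideal.mem_of_dvd _ (prod_dvd_prod_of_subset _ _ _ subset_union_left)
      (Ideal.subset_span (Set.mem_image_of_mem _ hw))
  obtain ⟨a, haT, ha⟩ : ∃ a ∈ T, a ∈ F w \ F v := by
    rw [prod_X_eq_monomial_sum_single, mem_ideal_span_X_image] at hquot
    obtain ⟨a, haT, ha⟩ :=
      hquot (∑ l ∈ F w \ F v, Finsupp.single l 1) (by simp [support_monomial])
    exact ⟨a, haT, by simpa [sum_single_one_apply] using ha⟩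
  have hXa : ∏ l ∈ insert a (F v), (X l : MvPolynomial σ R) ∈
      Ideal.span ((fun e => monomial e 1) '' ((fun i => ∑ l ∈ F i, Finsupp.single l 1) '' s)) := by
    rw [prod_insert (mem_sdiff.1 ha).2, Set.image_image, ← Ideal.mem_colon_span_singleton]
    simp only [← prod_X_eq_monomial_sum_single, hT]
    exact Ideal.subset_span ⟨a, haT, rfl⟩
  rw [prod_X_eq_monomial_sum_single, mem_ideal_span_monomial_image] at hXa
  obtain ⟨_, ⟨w', hw', rfl⟩, hle⟩ :=
    hXa (∑ l ∈ insert a (F v), Finsupp.single l 1) (by simp [support_monomial])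
  exact ⟨a, ha, w', hw', sum_single_one_le_iff.1 hle⟩

end SquarefreeMonomial

theorem Finset.sdiff_eq_singleton_of_subset_insert {α : Type*} [DecidableEq α] {s t : Finset α}
    {a : α} (h : s ⊆ insert a t) (hcard : #t ≤ #s) (hne : s ≠ t) : s \ t = {a} := by
  have hsub : s \ t ⊆ {a} := fun b hb => by
    rw [mem_sdiff] at hb
    simpa [hb.2] using h hb.1
  refine (subset_singleton_iff.1 hsub).resolve_left fun hempty => hne ?_
  exact eq_of_subset_of_card_le (sdiff_eq_empty_iff_subset.1 hempty) hcard

theorem Finset.card_add_two_le_card_union {α : Type*} [DecidableEq α] {s t : Finset α}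
    (hcard : #t ≤ #s) (hne : s ≠ t) (hsdiff : #(s \ t) ≠ 1) : #t + 2 ≤ #(s ∪ t) := by
  have hpos : 0 < #(s \ t) := card_pos.2 <| nonempty_iff_ne_empty.2 fun hempty =>
    hne (eq_of_subset_of_card_le (sdiff_eq_empty_iff_subset.1 hempty) hcard)
  rw [← card_sdiff_add_card]
  omega

theorem syzGraph_adj_iff {n m d : ℕ} {F : Fin m → Finset (Fin n)} (hcard : ∀ i, #(F i) = d)
    {i j : Fin m} : (syzGraph F d).Adj i j ↔ #(F i \ F j) = 1 := by
  have hsplit := card_sdiff_add_card_inter (F i) (F j)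
  rw [hcard] at hsplit
  refine ⟨fun h => by have := h.2; omega, fun h => ⟨?_, by omega⟩⟩
  rintro rfl
  simp at h

section Cycle

variable {m : ℕ} [NeZero m]

theorem Fin.one_ne_zero_of_one_lt (hm : 1 < m) : (1 : Fin m) ≠ 0 := by
  rw [Ne, Fin.ext_iff, Fin.val_one', Fin.val_zero, Nat.one_mod_eq_zero_iff]
  omega

open Fin.CommRing in
theorem Fin.exists_and_not_add_one {p : Fin m → Prop} {i j : Fin m} (hi : p i) (hj : ¬ p j) :
    ∃ k, p k ∧ ¬ p (k + 1) := by
  by_contra! hstep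
  have hiter : ∀ c : ℕ, p (i + c) := by
    intro c
    induction c with
    | zero => simpa using hi
    | succ c ih => simpa [add_assoc] using hstep _ ih
  exact hj (by simpa using hiter (j - i).val)

theorem Fin.sum_ite_neighbor_lt {α : Type*} [LinearOrder α] (hm : 1 < m)
    {pos : Fin m → α} (hpos : Function.Injective pos) :
    ∑ v, ((if pos (v + 1) < pos v then 1 else 0) + (if pos (v - 1) < pos v then 1 else 0)) = m := by
  have hone := Fin.one_ne_zero_of_one_lt hm
  -- each edge `{v, v + 1}` is counted once, at its later endpoint
  have hshift : ∑ v, (if pos (v - 1) < pos v then 1 else 0) =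
      ∑ v, (if pos v < pos (v + 1) then 1 else 0) :=
    (Fintype.sum_equiv (Equiv.addRight 1) _ _ fun v => by simp).symm
  rw [sum_add_distrib, hshift, ← sum_add_distrib]
  have hterm : ∀ v,
      (if pos (v + 1) < pos v then 1 else 0) + (if pos v < pos (v + 1) then 1 else 0) = 1 := by
    intro v
    rcases (hpos.ne (add_ne_left.2 hone) : pos (v + 1) ≠ pos v).lt_or_gt with h | h
    · simp [h, h.not_gt]
    · simp [h, h.not_gt]
  simp [hterm]

theorem Fin.not_add_one_lt_and_sub_one_lt {α : Type*} [LinearOrder α] (hm : 1 < m)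
    {pos : Fin m → α} (hpos : Function.Injective pos) {first last : Fin m}
    (hlast : ∀ w, pos w ≤ pos last)
    (hearlier : ∀ w ≠ first, pos (w + 1) < pos w ∨ pos (w - 1) < pos w) {v : Fin m}
    (hv : v ≠ last) : ¬ (pos (v + 1) < pos v ∧ pos (v - 1) < pos v) := by
  rintro ⟨hvsucc, hvpred⟩
  have hone := Fin.one_ne_zero_of_one_lt hm
  have hlastsucc : pos (last + 1) < pos last :=
    (hlast _).lt_of_ne (hpos.ne (add_ne_left.2 hone))
  have hlastpred : pos (last - 1) < pos last :=
    (hlast _).lt_of_ne (hpos.ne (sub_eq_self.not.2 hone))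
  -- `w` has at least `1 + [w = v] + [w = last] - [w = first]` earlier neighbours, and these
  -- lower bounds add up to `m + 1`
  have hlow : ∀ w, 1 + (if w = v then 1 else 0) + (if w = last then 1 else 0) ≤
      (if pos (w + 1) < pos w then 1 else 0) + (if pos (w - 1) < pos w then 1 else 0) +
      (if w = first then 1 else 0) := by
    intro w
    by_cases hwl : w = last
    · subst hwl
      rw [if_pos hlastsucc, if_pos hlastpred, if_neg (Ne.symm hv), if_pos rfl]
      omega
    by_cases hwv : w = v
    · subst hwv
      rw [if_pos hvsucc, if_pos hvpred, if_pos rfl, if_neg hwl]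
      omega
    rw [if_neg hwv, if_neg hwl]
    by_cases hwf : w = first
    · rw [if_pos hwf]
      omega
    rcases hearlier w hwf with h | h <;> simp [h, hwf]
  have hsum := sum_le_sum fun w (_ : w ∈ univ) => hlow w
  simp only [sum_add_distrib, Fin.sum_ite_neighbor_lt hm hpos, sum_const, smul_eq_mul, mul_one,
    sum_ite_eq', mem_univ, if_true] at hsum
  omega

end Cycle

/-- Linear quotients of the squarefree monomials `x^{F v}` in the order `pos`, read on supports:
for each earlier `w`, the colon ideal by `x^{F v}` has a variable generator
`x_a = x^{F w' \ F v}` (with `w'` earlier) dividing `x^{F w \ F v}`. -/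
def IsLinearQuotientOrder {ι α β : Type*} [LT α] [DecidableEq β] (F : ι → Finset β)
    (pos : ι → α) : Prop :=
  ∀ v w, pos w < pos v → ∃ w', pos w' < pos v ∧ ∃ a ∈ F w, F w' \ F v = {a}

theorem exists_isLinearQuotientOrder_of_linQuot {k : Type*} [Field k] {n m d : ℕ}
    {F : Fin m → Finset (Fin n)} (hinj : Function.Injective F) (hcard : ∀ i, #(F i) = d)
    (h : LinQuot fun i => ∏ l ∈ F i, (X l : MvPolynomial (Fin n) k)) :
    ∃ pos : Fin m → Fin m, Function.Injective pos ∧ IsLinearQuotientOrder F pos := by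
  obtain ⟨σ, hσ⟩ := h
  refine ⟨σ.symm, σ.symm.injective, fun v w hwv => ?_⟩
  obtain ⟨T, hT⟩ := hσ (σ.symm v) (Nat.ne_zero_of_lt hwv)
  obtain ⟨a, ha, j, hj, hsub⟩ :=
    exists_subset_insert_of_colon_eq_span_X (fun j => F (σ j)) hT (w := σ.symm w) hwv
  replace hj : j < σ.symm v := hj
  simp only [Equiv.apply_symm_apply] at ha hsub
  have hne : F (σ j) ≠ F v := hinj.ne fun hjv => hj.ne (σ.eq_symm_apply.2 hjv)
  exact ⟨σ j, by simpa using hj, a, (mem_sdiff.1 ha).1,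
    sdiff_eq_singleton_of_subset_insert hsub (by rw [hcard, hcard]) hne⟩

section CyclicSupports

variable {β : Type*} [DecidableEq β] {m d : ℕ} [NeZero m] {F : Fin m → Finset β}

theorem card_le_of_card_sdiff_add_one_eq_one [Fintype β] (hstep : ∀ i, #(F i \ F (i + 1)) = 1)
    (hvar : ∀ a, (∃ j, a ∈ F j) ∧ ∃ j, a ∉ F j) : Fintype.card β ≤ m := by
  have hcover : (univ : Finset β) ⊆ univ.biUnion fun i => F i \ F (i + 1) := fun a _ => by
    obtain ⟨⟨i, hi⟩, j, hj⟩ := hvar a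
    obtain ⟨k, hk⟩ := Fin.exists_and_not_add_one (p := (a ∈ F ·)) hi hj
    simpa using ⟨k, hk⟩
  calc Fintype.card β = #(univ : Finset β) := rfl
    _ ≤ ∑ i, #(F i \ F (i + 1)) := (card_le_card hcover).trans card_biUnion_le
    _ = m := by simp [hstep]

theorem add_two_le_card_of_cycle [Fintype β] (hm : 4 ≤ m) (hinj : Function.Injective F)
    (hcard : ∀ i, #(F i) = d) (hcyc : ∀ i j, #(F i \ F j) = 1 ↔ (j = i + 1 ∨ i = j + 1)) :
    d + 2 ≤ Fintype.card β := by
  have h2 : (2 : Fin m) ≠ 0 ∧ (0 : Fin m) ≠ 2 + 1 ∧ (2 : Fin m) ≠ 0 + 1 := by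
    simp [Fin.ext_iff, Fin.val_add, Nat.mod_eq_of_lt (show 3 < m by omega),
      Nat.mod_eq_of_lt (show 2 < m by omega), Nat.mod_eq_of_lt (show 1 < m by omega)]
  calc d + 2 = #(F 0) + 2 := by rw [hcard]
    _ ≤ #(F 2 ∪ F 0) := card_add_two_le_card_union (by rw [hcard, hcard]) (hinj.ne h2.1)
        fun h => ((hcyc 2 0).1 h).elim h2.2.1 h2.2.2
    _ ≤ Fintype.card β := card_le_univ _

theorem IsLinearQuotientOrder.le_add_two {α : Type*} [LinearOrder α] (hm : 1 < m)
    (hcard : ∀ i, #(F i) = d) (hcyc : ∀ i j, #(F i \ F j) = 1 ↔ (j = i + 1 ∨ i = j + 1))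
    {pos : Fin m → α} (hpos : Function.Injective pos) (hF : IsLinearQuotientOrder F pos) :
    m ≤ d + 2 := by
  obtain ⟨first, hfirst⟩ := Finite.exists_min pos
  obtain ⟨last, hlast⟩ := Finite.exists_max pos
  have hneighbor : ∀ {v w a}, F w \ F v = {a} → w = v + 1 ∨ w = v - 1 := fun h =>
    ((hcyc _ _).1 (by simp [h])).symm.imp id fun h => eq_sub_of_add_eq h.symm
  have hearlier : ∀ v ≠ first, pos (v + 1) < pos v ∨ pos (v - 1) < pos v := by
    intro v hv
    obtain ⟨w, hw, a, -, ha⟩ := hF v first ((hfirst v).lt_of_ne (hpos.ne hv.symm))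
    rcases hneighbor ha with rfl | rfl
    exacts [Or.inl hw, Or.inr hw]
  -- every earlier `w` is served by the same earlier neighbour of `v`, hence by the same variable
  have hcommon : ∀ v ∈ (univ.erase first).erase last, ∃ a ∈ F first,
      a ∉ F v ∧ ∀ w, pos w < pos v → a ∈ F w := by
    intro v hv
    simp only [mem_erase, mem_univ, and_true] at hv
    obtain ⟨w₀, hw₀, a, haf, ha⟩ := hF v first ((hfirst v).lt_of_ne (hpos.ne hv.2.symm))
    refine ⟨a, haf, (mem_sdiff.1 (ha ▸ mem_singleton_self a : a ∈ F w₀ \ F v)).2, fun w hw => ?_⟩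
    obtain ⟨w', hw', b, hb, hb'⟩ := hF v w hw
    have hboth := Fin.not_add_one_lt_and_sub_one_lt hm hpos hlast hearlier hv.1
    obtain rfl : w' = w₀ := by
      rcases hneighbor ha with rfl | rfl <;> rcases hneighbor hb' with rfl | rfl
      · rfl
      · exact absurd ⟨hw₀, hw'⟩ hboth
      · exact absurd ⟨hw', hw₀⟩ hboth
      · rfl
    rwa [singleton_inj.1 (ha.symm.trans hb')]
  have hfl : last ≠ first := by
    intro h
    rw [h] at hlast
    exact Fin.one_ne_zero_of_one_lt hm
      (hpos (((hlast 1).trans (hfirst 0)).antisymm ((hlast 0).trans (hfirst 1))))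
  have hcount := card_le_card_of_forall_subsingleton
    (fun v a => a ∉ F v ∧ ∀ w, pos w < pos v → a ∈ F w) hcommon fun a _ v hv w hw => by
      by_contra hvw
      rcases (hpos.ne hvw).lt_or_gt with h | h
      · exact hv.2.1 (hw.2.2 v h)
      · exact hw.2.1 (hv.2.2 w h)
  rw [card_erase_of_mem (mem_erase.2 ⟨hfl, mem_univ _⟩), card_erase_of_mem (mem_univ _),
    card_univ, Fintype.card_fin, hcard] at hcount
  omega

end CyclicSupports

/-- Suppose every variable divides at least one but not all of the generators,
and `G_I` is the cycle `u 0 — u 1 — ⋯ — u (m-1) — u 0` with `m ≥ 4`. If `d + 2 < n` or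
`m ≠ n` then `I` does not have linear quotients. -/
theorem stmt4 {k : Type*} [Field k] {n m d : ℕ} [NeZero m] (hm : 4 ≤ m)
    (F : Fin m → Finset (Fin n)) (hinj : Function.Injective F)
    (hcard : ∀ i, (F i).card = d)
    (hvar : ∀ a : Fin n, (∃ j, a ∈ F j) ∧ (∃ j, a ∉ F j))
    (hcyc : ∀ i j : Fin m, (syzGraph F d).Adj i j ↔ (j = i + 1 ∨ i = j + 1))
    (h : d + 2 < n ∨ m ≠ n) :
    ¬ LinQuot (fun i : Fin m => ∏ l ∈ F i, (X l : MvPolynomial (Fin n) k)) := by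
  intro hlin
  have hcyc' : ∀ i j, #(F i \ F j) = 1 ↔ (j = i + 1 ∨ i = j + 1) := fun i j =>
    (syzGraph_adj_iff hcard).symm.trans (hcyc i j)
  have hdn : d + 2 ≤ n := by simpa using add_two_le_card_of_cycle hm hinj hcard hcyc'
  have hnm : n ≤ m := by
    simpa using
      card_le_of_card_sdiff_add_one_eq_one (fun i => (hcyc' i (i + 1)).2 (Or.inl rfl)) hvar
  obtain ⟨pos, hpos, hord⟩ := exists_isLinearQuotientOrder_of_linQuot hinj hcard hlin
  have hmd : m ≤ d + 2 := hord.le_add_two (by omega) hcard hcyc' hpos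
  omega
end

section
/- Assume that I has linear quotients and that G_I is a tree. Let v be a squarefree monomial of degree d with v ∉ G(I) such that v is a leaf of the syzygy graph G_{⟨I,v⟩} of the ideal ⟨I, v⟩, i.e., v is adjacent in G_{⟨I,v⟩} to exactly one generator u_i of I; write F(u_i) ∖ F(v) = {l}. Then ⟨I, v⟩ has linear quotients if and only if l ∈ F(u_t) for all t = 1,…,m. -/
open MvPolynomial Finset

attribute [local instance] Classical.propDecidable

/-! For squarefree monomials the colon `(x_A : A ∈ S) : x_C` is generated by the `x_{A \ C}`,
so in an order with linear quotients, for all `j < i` some earlier `F_{j'}` has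
`F_{j'} \ F_i = {a}` with `a ∈ F_j \ F_i`.

If every `F_t` contains `l`, then `I : v = (x_l)`, so `v` can be appended to a linear quotient
order of `I`. Conversely, in a linear quotient order of `⟨I, v⟩` let `u_s` be the first generator
with `l ∉ F_s`. If `u_s` precedes `v`, a variable in the colon at `v` comes from a neighbour of
`v` in the syzygy graph, so it is `x_l`, which does not divide `u_s`. If `v` precedes `u_s`, some
`x_a` with `a ∈ F(v) \ F_s` lies in the colon at `u_s`; it cannot come from `v` (that would make
`u_s` the neighbour `u_{i₀}`, but `l ∈ F_{i₀}`), nor from an earlier `u_t`, since then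
`l ∈ F_t \ F_s = {a}` while `l ∉ F(v)`. -/

namespace Finsupp

variable {σ : Type*} [DecidableEq σ]

theorem sum_single_one_apply (A : Finset σ) (b : σ) :
    (∑ a ∈ A, single a 1 : σ →₀ ℕ) b = if b ∈ A then 1 else 0 := by
  simp [single_apply]

theorem sum_single_one_le_iff {A : Finset σ} {μ : σ →₀ ℕ} :
    ∑ a ∈ A, single a 1 ≤ μ ↔ ∀ a ∈ A, μ a ≠ 0 := by
  simp only [le_def, sum_single_one_apply, ← Nat.one_le_iff_ne_zero]
  refine ⟨fun h a ha => by simpa [ha] using h a, fun h a => ?_⟩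
  split_ifs with ha
  exacts [h a ha, Nat.zero_le _]

theorem sum_single_one_le_sum_single_one_iff {A C : Finset σ} :
    ∑ a ∈ A, single a 1 ≤ ∑ a ∈ C, single a 1 ↔ A ⊆ C := by
  simp [sum_single_one_le_iff, sum_single_one_apply, Finset.subset_iff]

theorem sum_single_one_le_add_iff {A C : Finset σ} {μ : σ →₀ ℕ} :
    ∑ a ∈ A, single a 1 ≤ μ + ∑ a ∈ C, single a 1 ↔
      ∑ a ∈ A \ C, single a 1 ≤ μ := by
  simp only [sum_single_one_le_iff, add_apply, sum_single_one_apply, Finset.mem_sdiff]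
  refine ⟨fun h a ha => by simpa [ha.2] using h a ha.1, fun h a ha => ?_⟩
  split_ifs with hC
  · omega
  · simpa using h a ⟨ha, hC⟩

end Finsupp

namespace MvPolynomial

variable {σ R : Type*} [CommSemiring R]

theorem prod_X_eq_monomial (A : Finset σ) :
    ∏ a ∈ A, (X a : MvPolynomial σ R) = monomial (∑ a ∈ A, Finsupp.single a 1) 1 :=
  (monomial_sum_one A _).symm

theorem mem_span_prod_X_image {S : Set (Finset σ)} {f : MvPolynomial σ R} :
    f ∈ Ideal.span ((fun A => ∏ a ∈ A, X a) '' S) ↔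
      ∀ μ ∈ f.support, ∃ A ∈ S, ∑ a ∈ A, Finsupp.single a 1 ≤ μ := by
  simp only [prod_X_eq_monomial]
  rw [← Set.image_image (fun μ => monomial μ (1 : R)), mem_ideal_span_monomial_image]
  simp

theorem support_prod_X [Nontrivial R] (A : Finset σ) :
    (∏ a ∈ A, X a : MvPolynomial σ R).support = {∑ a ∈ A, Finsupp.single a 1} := by
  rw [prod_X_eq_monomial, support_monomial, if_neg one_ne_zero]

variable [DecidableEq σ]

theorem colon_span_prod_X_image (S : Set (Finset σ)) (C : Finset σ) :
    Submodule.colon (Ideal.span ((fun A => ∏ a ∈ A, (X a : MvPolynomial σ R)) '' S))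
        (Ideal.span {∏ a ∈ C, X a} : Ideal (MvPolynomial σ R)) =
      Ideal.span ((fun A => ∏ a ∈ A, X a) '' ((· \ C) '' S)) := by
  apply le_antisymm
  · intro r hr
    rw [Ideal.mem_colon_span_singleton, mem_span_prod_X_image] at hr
    rw [mem_span_prod_X_image]
    intro μ hμ
    have hμC : μ + ∑ a ∈ C, Finsupp.single a 1 ∈ (r * ∏ a ∈ C, X a).support := by
      simpa [prod_X_eq_monomial, coeff_mul_monomial] using hμ
    obtain ⟨A, hA, hle⟩ := hr _ hμC
    exact ⟨A \ C, Set.mem_image_of_mem _ hA, Finsupp.sum_single_one_le_add_iff.1 hle⟩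
  · rw [Ideal.span_le]
    rintro _ ⟨_, ⟨A, hA, rfl⟩, rfl⟩
    rw [SetLike.mem_coe, Ideal.mem_colon_span_singleton]
    have hprod : (∏ a ∈ A \ C, X a : MvPolynomial σ R) * ∏ a ∈ C, X a =
        (∏ a ∈ C \ A, X a) * ∏ a ∈ A, X a := by
      rw [← prod_union sdiff_disjoint, ← prod_union sdiff_disjoint, sdiff_union_self_eq_union,
        sdiff_union_self_eq_union, union_comm]
    rw [hprod]
    exact Ideal.mul_mem_left _ _ (Ideal.subset_span ⟨A, hA, rfl⟩)

variable [Nontrivial R]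

theorem prod_X_mem_span_prod_X_image {S : Set (Finset σ)} {C : Finset σ} :
    ∏ a ∈ C, (X a : MvPolynomial σ R) ∈ Ideal.span ((fun A => ∏ a ∈ A, X a) '' S) ↔
      ∃ A ∈ S, A ⊆ C := by
  simp [mem_span_prod_X_image, support_prod_X, Finsupp.sum_single_one_le_sum_single_one_iff]

theorem prod_X_mem_span_X_image {T : Set σ} {C : Finset σ} :
    ∏ a ∈ C, (X a : MvPolynomial σ R) ∈ Ideal.span (X '' T) ↔ ∃ a ∈ T, a ∈ C := by
  simp [mem_ideal_span_X_image, support_prod_X, Finsupp.sum_single_one_apply]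

theorem exists_sdiff_subset_singleton_of_colon_eq_span_X {S : Set (Finset σ)} {A C : Finset σ}
    {T : Set σ}
    (hT : Submodule.colon (Ideal.span ((fun A => ∏ a ∈ A, (X a : MvPolynomial σ R)) '' S))
        (Ideal.span {∏ a ∈ C, X a} : Ideal (MvPolynomial σ R)) = Ideal.span (X '' T))
    (hA : A ∈ S) : ∃ a ∈ A \ C, ∃ A' ∈ S, A' \ C ⊆ {a} := by
  rw [colon_span_prod_X_image] at hT
  have hAC : ∏ a ∈ A \ C, (X a : MvPolynomial σ R) ∈ Ideal.span (X '' T) :=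
    hT ▸ Ideal.subset_span ⟨A \ C, ⟨A, hA, rfl⟩, rfl⟩
  obtain ⟨a, haT, haAC⟩ := prod_X_mem_span_X_image.1 hAC
  have hXa : ∏ b ∈ {a}, (X b : MvPolynomial σ R) ∈ Ideal.span (X '' T) := by
    rw [prod_singleton]
    exact Ideal.subset_span ⟨a, haT, rfl⟩
  rw [← hT, prod_X_mem_span_prod_X_image] at hXa
  obtain ⟨_, ⟨A', hA', rfl⟩, hA'C⟩ := hXa
  exact ⟨a, haAC, A', hA', hA'C⟩

theorem colon_eq_span_X_singleton {S : Set (Finset σ)} {C : Finset σ} {l : σ}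
    (hS : ∀ A ∈ S, l ∈ A \ C) (hl : ∃ A ∈ S, A \ C ⊆ {l}) :
    Submodule.colon (Ideal.span ((fun A => ∏ a ∈ A, (X a : MvPolynomial σ R)) '' S))
        (Ideal.span {∏ a ∈ C, X a} : Ideal (MvPolynomial σ R)) = Ideal.span (X '' {l}) := by
  rw [colon_span_prod_X_image]
  apply le_antisymm <;> rw [Ideal.span_le]
  · rintro _ ⟨_, ⟨A, hA, rfl⟩, rfl⟩
    exact prod_X_mem_span_X_image.2 ⟨l, rfl, hS A hA⟩
  · rintro _ ⟨_, rfl, rfl⟩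
    obtain ⟨A, hA, hAC⟩ := hl
    rw [SetLike.mem_coe, ← prod_singleton X, prod_X_mem_span_prod_X_image]
    exact ⟨A \ C, ⟨A, hA, rfl⟩, hAC⟩

end MvPolynomial

def LinQuotOrder {α : Type*} [DecidableEq α] {m : ℕ} (G : Fin m → Finset α)
    (σ : Equiv.Perm (Fin m)) : Prop :=
  ∀ i j, j < i → ∃ a ∈ G (σ j) \ G (σ i), ∃ j' < i, G (σ j') \ G (σ i) ⊆ {a}

section LinearQuotients

variable {k : Type*} [Field k] {n m : ℕ}

theorem LinQuot.exists_linQuotOrder {G : Fin m → Finset (Fin n)}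
    (h : LinQuot (fun i => ∏ a ∈ G i, (X a : MvPolynomial (Fin n) k))) :
    ∃ σ, LinQuotOrder G σ := by
  obtain ⟨σ, hσ⟩ := h
  refine ⟨σ, fun i j hji => ?_⟩
  obtain ⟨T, hT⟩ := hσ i (Nat.ne_zero_of_lt hji)
  rw [← Set.image_image (fun A => ∏ a ∈ A, X a) (fun j => G (σ j))] at hT
  obtain ⟨a, ha, _, ⟨j', hj', rfl⟩, hsub⟩ :=
    exists_sdiff_subset_singleton_of_colon_eq_span_X hT ⟨j, hji, rfl⟩
  exact ⟨a, ha, j', hj', hsub⟩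

theorem LinQuot.snoc {u : Fin m → MvPolynomial (Fin n) k} {v : MvPolynomial (Fin n) k}
    (hu : LinQuot u) {T : Set (Fin n)}
    (hv : Submodule.colon (Ideal.span (Set.range u)) (Ideal.span {v} : Ideal _) =
      Ideal.span (X '' T)) :
    LinQuot (Fin.snoc u v : Fin (m + 1) → MvPolynomial (Fin n) k) := by
  obtain ⟨σ, hσ⟩ := hu
  set τ := σ.viaFintypeEmbedding Fin.castSuccEmb
  have hτ (j : Fin m) : τ j.castSucc = (σ j).castSucc := σ.viaFintypeEmbedding_apply_image _ j
  have hτ_last : τ (Fin.last m) = Fin.last m :=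
    σ.viaFintypeEmbedding_apply_notMem_range _ (by simp)
  refine ⟨τ, fun i hi => ?_⟩
  rcases Fin.eq_castSucc_or_eq_last i with ⟨i, rfl⟩ | rfl
  · have himage : (fun j => (Fin.snoc u v : Fin (m + 1) → _) (τ j)) '' {j | j < i.castSucc} =
        (fun j => u (σ j)) '' {j | j < i} := by
      rw [show {j | j < i.castSucc} = Fin.castSucc '' Set.Iio i from
        (Fin.image_castSucc_Iio i).symm, Set.image_image]
      simp only [hτ, Fin.snoc_castSucc]
      rfl
    simpa [himage, hτ] using hσ i (by simpa using hi)
  · have himage : (fun j => (Fin.snoc u v : Fin (m + 1) → _) (τ j)) '' {j | j < Fin.last m} =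
        Set.range u := by
      rw [show {j | j < Fin.last m} = Set.range Fin.castSucc by ext j; simp [Fin.lt_def],
        ← Set.range_comp, ← σ.surjective.range_comp u]
      congr 1
      funext j
      simp [hτ]
    exact ⟨T, by simpa [himage, hτ_last] using hv⟩

end LinearQuotients

theorem Finset.card_inter_add_one_of_sdiff_eq_singleton {α : Type*} [DecidableEq α]
    {A C : Finset α} {a : α} (h : A \ C = {a}) : (A ∩ C).card + 1 = A.card := by
  rw [← card_inter_add_card_sdiff A C, h, card_singleton]

theorem syzGraph_snoc_adj_last_castSucc_iff {n m d : ℕ} {F : Fin m → Finset (Fin n)}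
    {B : Finset (Fin n)} {j : Fin m} :
    (syzGraph (Fin.snoc F B) d).Adj (Fin.last m) j.castSucc ↔ (F j ∩ B).card + 1 = d := by
  simp [syzGraph, (Fin.castSucc_lt_last j).ne', inter_comm]

theorem LinQuotOrder.forall_mem_of_snoc {α : Type*} [DecidableEq α] {m : ℕ}
    {F : Fin m → Finset α} {B : Finset α} {l : α} {σ : Equiv.Perm (Fin (m + 1))}
    (hσ : LinQuotOrder (Fin.snoc F B) σ) (hlB : l ∉ B)
    (hF : ∀ t a, F t \ B ⊆ {a} → a = l) (hB : ∀ t a, B \ F t = {a} → l ∈ F t) (t : Fin m) :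
    l ∈ F t := by
  suffices h : ∀ q s, σ q = s.castSucc → l ∈ F s from h _ t (σ.apply_symm_apply _)
  intro q
  induction q using WellFoundedLT.induction with
  | ind q ih =>
    intro s hqs
    by_contra hls
    have hp : σ (σ.symm (Fin.last m)) = Fin.last m := σ.apply_symm_apply _
    have hqp : q ≠ σ.symm (Fin.last m) := by
      rintro rfl
      exact (Fin.castSucc_lt_last s).ne (hqs.symm.trans hp)
    rcases hqp.lt_or_gt with hq | hq
    · obtain ⟨a, ha, j, hj, hsub⟩ := hσ _ _ hq
      rw [hp, hqs, Fin.snoc_castSucc, Fin.snoc_last] at ha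
      rw [hp, Fin.snoc_last] at hsub
      rcases Fin.eq_castSucc_or_eq_last (σ j) with ⟨t, ht⟩ | ht
      · rw [ht, Fin.snoc_castSucc] at hsub
        exact hls (hF t a hsub ▸ (mem_sdiff.1 ha).1)
      · exact hj.ne (σ.injective (ht.trans hp.symm))
    · obtain ⟨a, ha, j, hj, hsub⟩ := hσ _ _ hq
      rw [hp, hqs, Fin.snoc_castSucc, Fin.snoc_last] at ha
      rw [hqs, Fin.snoc_castSucc] at hsub
      rcases Fin.eq_castSucc_or_eq_last (σ j) with ⟨t, ht⟩ | ht
      · rw [ht, Fin.snoc_castSucc] at hsub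
        have hla : l = a := mem_singleton.1 (hsub (mem_sdiff.2 ⟨ih j hj t ht, hls⟩))
        exact hlB (hla ▸ (mem_sdiff.1 ha).1)
      · rw [ht, Fin.snoc_last] at hsub
        exact hls (hB s a ((Finset.Nonempty.subset_singleton_iff ⟨a, ha⟩).1 hsub))

theorem stmt8_general {k : Type*} [Field k] {n m d : ℕ}
    (F : Fin m → Finset (Fin n))
    (hcard : ∀ i, (F i).card = d)
    (hLQ : LinQuot (fun i : Fin m => ∏ l ∈ F i, (X l : MvPolynomial (Fin n) k)))
    (B : Finset (Fin n)) (hB : B.card = d) (hBnew : ∀ j, F j ≠ B)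
    (i₀ : Fin m)
    (honly : ∀ j : Fin m, j ≠ i₀ →
      ¬ (syzGraph (Fin.snoc F B) d).Adj (Fin.last m) (Fin.castSucc j))
    (l : Fin n) (hl : F i₀ \ B = {l}) :
    LinQuot (fun i : Fin (m + 1) =>
        ∏ a ∈ (Fin.snoc F B : Fin (m + 1) → Finset (Fin n)) i, (X a : MvPolynomial (Fin n) k)) ↔
      ∀ t : Fin m, l ∈ F t := by
  have hlF : l ∈ F i₀ ∧ l ∉ B := mem_sdiff.1 (hl ▸ mem_singleton_self l)
  have h_eq_i₀ (t : Fin m) (ht : (F t ∩ B).card + 1 = d) : t = i₀ :=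
    by_contra fun hne => honly t hne (syzGraph_snoc_adj_last_castSucc_iff.2 ht)
  constructor
  · intro h
    obtain ⟨σ, hσ⟩ := h.exists_linQuotOrder
    refine hσ.forall_mem_of_snoc hlF.2 (fun t a hsub => ?_) (fun t a hBt => ?_)
    · have hne : (F t \ B).Nonempty := sdiff_nonempty.2 fun hFB =>
        hBnew t (eq_of_subset_of_card_le hFB (by rw [hcard, hB]))
      have hFt : F t \ B = {a} := hne.subset_singleton_iff.1 hsub
      obtain rfl := h_eq_i₀ t (hcard t ▸ card_inter_add_one_of_sdiff_eq_singleton hFt)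
      exact singleton_inj.1 (hFt.symm.trans hl)
    · have hadj := card_inter_add_one_of_sdiff_eq_singleton hBt
      rw [inter_comm, hB] at hadj
      exact h_eq_i₀ t hadj ▸ hlF.1
  · intro hall
    show LinQuot ((fun A => ∏ a ∈ A, (X a : MvPolynomial (Fin n) k)) ∘ Fin.snoc F B)
    rw [Fin.comp_snoc]
    have hcolon := colon_eq_span_X_singleton (R := k) (S := Set.range F) (C := B)
      (by rintro _ ⟨t, rfl⟩; exact mem_sdiff.2 ⟨hall t, hlF.2⟩) ⟨F i₀, ⟨i₀, rfl⟩, hl.subset⟩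
    rw [← Set.range_comp] at hcolon
    exact hLQ.snoc hcolon

/-- Suppose `I` has linear quotients, `G_I` is a tree, and `v` is a squarefree
monomial of degree `d` (with support `B`) not among the generators of `I`, which is a leaf
of the syzygy graph of `⟨I, v⟩`, adjacent only to the generator `u i₀`; write
`F i₀ \ B = {l}`. Then `⟨I, v⟩` has linear quotients iff `l ∈ F t` for all `t`. -/
theorem stmt8 {k : Type*} [Field k] {n m d : ℕ}
    (F : Fin m → Finset (Fin n)) (hinj : Function.Injective F)
    (hcard : ∀ i, (F i).card = d)
    (hLQ : LinQuot (fun i : Fin m => ∏ l ∈ F i, (X l : MvPolynomial (Fin n) k)))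
    (htree : (syzGraph F d).IsTree)
    (B : Finset (Fin n)) (hB : B.card = d) (hBnew : ∀ j, F j ≠ B)
    (i₀ : Fin m)
    (hleaf : (syzGraph (Fin.snoc F B) d).Adj (Fin.last m) (Fin.castSucc i₀))
    (honly : ∀ j : Fin m, j ≠ i₀ →
      ¬ (syzGraph (Fin.snoc F B) d).Adj (Fin.last m) (Fin.castSucc j))
    (l : Fin n) (hl : F i₀ \ B = {l}) :
    LinQuot (fun i : Fin (m + 1) =>
        ∏ a ∈ (Fin.snoc F B : Fin (m + 1) → Finset (Fin n)) i, (X a : MvPolynomial (Fin n) k)) ↔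
      ∀ t : Fin m, l ∈ F t :=
  stmt8_general F hcard hLQ B hB hBnew i₀ honly l hl
end

section
/- Assume the syzygy graph G_I is a tree. Then the following are equivalent: (i) I has linear relations; (ii) the induced subgraph G_I^{(u,v)} is connected for all u, v ∈ G(I); (iii) for all u, v ∈ G(I), if u = w_1, w_2, …, w_s = v is the unique path between u and v in G_I, then F(w_j) ⊆ F(w_i) ∪ F(w_k) for all 1 ≤ i ≤ j ≤ k ≤ s. -/
open MvPolynomial Finset

attribute [local instance] Classical.propDecidable

namespace Stmt10Aux

/-! ### Exponent bookkeeping -/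

variable {n : ℕ}

noncomputable def eS (S : Finset (Fin n)) : Fin n →₀ ℕ := ∑ l ∈ S, Finsupp.single l 1

lemma eS_apply (S : Finset (Fin n)) (a : Fin n) : eS S a = if a ∈ S then 1 else 0 := by
  classical
  rw [eS, Finset.sum_apply']
  simp [Finsupp.single_apply]

lemma eS_le_iff {S T : Finset (Fin n)} : eS S ≤ eS T ↔ S ⊆ T := by
  constructor
  · intro h a ha
    have := h a
    simp [eS_apply, ha] at this
    by_contra hb; simp [hb] at this
  · intro h a
    simp only [eS_apply]
    split_ifs with h1 h2
    · exact le_refl _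
    · exact absurd (h h1) h2
    · omega
    · omega

lemma eS_inj {S T : Finset (Fin n)} (h : eS S = eS T) : S = T :=
  subset_antisymm (eS_le_iff.1 h.le) (eS_le_iff.1 h.ge)

lemma eS_sub (T S : Finset (Fin n)) : eS T - eS S = eS (T \ S) := by
  ext a
  rw [Finsupp.tsub_apply]
  simp only [eS_apply, Finset.mem_sdiff]
  split_ifs <;> simp_all

lemma eS_support (S : Finset (Fin n)) : (eS S).support = S := by
  ext a
  rw [Finsupp.mem_support_iff, eS_apply]
  split_ifs with h <;> simp [h]

lemma eS_union_le {S T : Finset (Fin n)} {g : Fin n →₀ ℕ} (h1 : eS S ≤ g) (h2 : eS T ≤ g) :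
    eS (S ∪ T) ≤ g := by
  intro a
  have ha1 := h1 a; have ha2 := h2 a
  simp only [eS_apply, Finset.mem_union] at *
  split_ifs with h
  · rcases h with h | h <;> simp_all
  · omega

lemma eS_insert {a : Fin n} {S : Finset (Fin n)} (ha : a ∉ S) :
    eS (insert a S) = Finsupp.single a 1 + eS S := by
  rw [eS, Finset.sum_insert ha]; rfl

lemma eS_union_disjoint {S T : Finset (Fin n)} (h : Disjoint S T) :
    eS (S ∪ T) = eS S + eS T := by
  rw [eS, Finset.sum_union h]; rfl

lemma prod_X_eq {k : Type*} [Field k] (S : Finset (Fin n)) :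
    (∏ l ∈ S, (X l : MvPolynomial (Fin n) k)) = monomial (eS S) 1 := by
  classical
  induction S using Finset.induction_on with
  | empty => simp [eS]
  | insert _ _ ha ih =>
      rw [Finset.prod_insert ha, ih, eS_insert ha, X, monomial_mul, one_mul]

lemma eq_of_monomial_one_eq {k : Type*} [Field k] {g g' : Fin n →₀ ℕ}
    (h : monomial g (1 : k) = monomial g' 1) : g = g' := by
  by_contra hne
  have := congrArg (coeff g) h
  rw [coeff_monomial, coeff_monomial, if_pos rfl, if_neg (fun hh => hne hh.symm)] at this
  exact one_ne_zero this

/-! ### Generators and syzygies -/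

variable {k : Type*} [Field k] {m : ℕ}

noncomputable def uF (F : Fin m → Finset (Fin n)) : Fin m → MvPolynomial (Fin n) k :=
  fun i => monomial (eS (F i)) 1

noncomputable def taylor (F : Fin m → Finset (Fin n)) (i j : Fin m) :
    Fin m → MvPolynomial (Fin n) k :=
  Pi.single i (monomial (eS (F j \ F i)) (1:k)) - Pi.single j (monomial (eS (F i \ F j)) (1:k))

lemma phi_apply (u : Fin m → MvPolynomial (Fin n) k) (c) : phi u c = ∑ i, c i * u i := rfl

lemma phi_single (u : Fin m → MvPolynomial (Fin n) k) (i : Fin m) (p) :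
    phi u (Pi.single i p) = p * u i := by
  rw [phi_apply, Finset.sum_eq_single i]
  · simp
  · intro j _ hj; simp [Pi.single_apply, hj]
  · simp

lemma phi_taylor (F : Fin m → Finset (Fin n)) (i j : Fin m) :
    phi (uF F) (taylor (k := k) F i j) = 0 := by
  rw [taylor, map_sub, phi_single, phi_single]
  simp only [uF]
  rw [monomial_mul, monomial_mul,
    ← eS_union_disjoint sdiff_disjoint, ← eS_union_disjoint sdiff_disjoint]
  rw [Finset.sdiff_union_self_eq_union, Finset.sdiff_union_self_eq_union, Finset.union_comm]
  simp

lemma support_sub_monomial_coeff (p : MvPolynomial (Fin n) k) (t : Fin n →₀ ℕ) :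
    (p - monomial t (coeff t p)).support = p.support.erase t := by
  ext u
  simp only [Finset.mem_erase, MvPolynomial.mem_support_iff, coeff_sub, coeff_monomial]
  by_cases h : t = u
  · subst h; simp
  · simp [h, Ne.symm h]

lemma support_add_monomial_mem {p : MvPolynomial (Fin n) k} {t : Fin n →₀ ℕ} {a : k}
    (ht : t ∈ p.support) : (p + monomial t a).support ⊆ p.support := by
  intro s hs
  rw [MvPolynomial.mem_support_iff] at hs ht ⊢
  rw [coeff_add, coeff_monomial] at hs
  by_cases h : t = s
  · subst h; exact ht
  · simpa [h] using hs

lemma smul_single (f q : MvPolynomial (Fin n) k) (p : Fin m) :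
    f • (Pi.single p q : Fin m → MvPolynomial (Fin n) k) = Pi.single p (f * q) := by
  funext i
  simp [Pi.single_apply, mul_ite, mul_zero]

/-! ### The kernel of `phi` is spanned by the Taylor syzygies -/

lemma ker_le_span_taylor (F : Fin m → Finset (Fin n)) :
    ∀ N (c : Fin m → MvPolynomial (Fin n) k),
      (∑ i, (c i).support.card) ≤ N →
      phi (uF F) c = 0 →
      c ∈ Submodule.span (MvPolynomial (Fin n) k)
        {w : Fin m → MvPolynomial (Fin n) k | ∃ i j, w = taylor F i j} := by
  intro N
  induction N with
  | zero =>
    intro c h _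
    have hc : c = 0 := by
      funext i
      have : (c i).support.card = 0 := by
        have h2 : (c i).support.card ≤ 0 := le_trans (Finset.single_le_sum
          (f := fun i => (c i).support.card) (fun i _ => Nat.zero_le _) (Finset.mem_univ i)) h
        omega
      rw [Finset.card_eq_zero, MvPolynomial.support_eq_empty] at this
      exact this
    rw [hc]; exact Submodule.zero_mem _
  | succ N ih =>
    intro c hN hc
    by_cases h0 : c = 0
    · rw [h0]; exact Submodule.zero_mem _
    · obtain ⟨i0, hi0⟩ := Function.ne_iff.mp h0
      obtain ⟨t0, ht0⟩ := (MvPolynomial.support_nonempty.mpr hi0)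
      rw [MvPolynomial.mem_support_iff] at ht0
      set s : Fin n →₀ ℕ := t0 + eS (F i0) with hs
      have hle0 : eS (F i0) ≤ s := le_add_self
      have hsub0 : s - eS (F i0) = t0 := add_tsub_cancel_right t0 _
      have hterm : ∀ i : Fin m, coeff s (c i * monomial (eS (F i)) (1:k)) =
          if eS (F i) ≤ s then coeff (s - eS (F i)) (c i) else 0 := by
        intro i
        rw [MvPolynomial.coeff_mul_monomial']
        split_ifs <;> simp
      have hsum : ∑ i, coeff s (c i * monomial (eS (F i)) (1:k)) = 0 := by
        have h2 := congrArg (coeff s) hc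
        rw [phi_apply] at h2
        simpa [uF, MvPolynomial.coeff_sum] using h2
      have hi0ne : coeff s (c i0 * monomial (eS (F i0)) (1:k)) ≠ 0 := by
        rw [hterm, if_pos hle0, hsub0]; exact ht0
      have hex : ∃ i1, i1 ≠ i0 ∧ coeff s (c i1 * monomial (eS (F i1)) (1:k)) ≠ 0 := by
        by_contra hno
        push_neg at hno
        rw [Finset.sum_eq_single i0] at hsum
        · exact hi0ne hsum
        · intro j _ hj; exact hno j hj
        · intro h; exact absurd (Finset.mem_univ i0) h
      obtain ⟨i1, hi1ne, hi1⟩ := hex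
      rw [hterm] at hi1
      have hle1 : eS (F i1) ≤ s := by by_contra h; rw [if_neg h] at hi1; exact hi1 rfl
      rw [if_pos hle1] at hi1
      set lam := coeff t0 (c i0) with hlam
      set w : Fin n →₀ ℕ := s - eS (F i0 ∪ F i1) with hw
      have hDle : eS (F i0 ∪ F i1) ≤ s := eS_union_le hle0 hle1
      have hkey : ∀ A B : Finset (Fin n), A ∪ B = F i0 ∪ F i1 → eS A ≤ s →
          w + eS (B \ A) = s - eS A := by
        intro A B hAB hA
        ext a
        have h1 := hDle a
        have h2 := hA a
        rw [← hAB] at h1 hw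
        simp only [Finsupp.add_apply, Finsupp.tsub_apply, hw, eS_apply, Finset.mem_union,
          Finset.mem_sdiff] at h1 h2 ⊢
        by_cases ha : a ∈ A <;> by_cases hb : a ∈ B <;>
          simp only [ha, hb, if_true, if_false, true_or, or_true, false_or, or_false,
            true_and, and_true, false_and, and_false, not_true, not_false_iff] at h1 h2 ⊢ <;>
          omega
      have hA : w + eS (F i1 \ F i0) = s - eS (F i0) := hkey _ _ rfl hle0
      have hB : w + eS (F i0 \ F i1) = s - eS (F i1) := hkey _ _ (Finset.union_comm _ _) hle1
      set c' : Fin m → MvPolynomial (Fin n) k :=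
        c - (monomial w lam) • taylor F i0 i1 with hc'
      have hphi' : phi (uF F) c' = 0 := by
        rw [hc', map_sub, map_smul, phi_taylor, hc, smul_zero, sub_zero]
      have ht1 : taylor (k := k) F i0 i1 i0 = monomial (eS (F i1 \ F i0)) 1 := by
        simp [taylor, Pi.single_eq_same, Pi.single_eq_of_ne (Ne.symm hi1ne)]
      have ht2 : taylor (k := k) F i0 i1 i1 = -monomial (eS (F i0 \ F i1)) 1 := by
        simp [taylor, Pi.single_eq_same, Pi.single_eq_of_ne hi1ne]
      have hc'i0 : c' i0 = c i0 - monomial t0 lam := by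
        rw [hc']
        simp only [Pi.sub_apply, Pi.smul_apply, ht1, smul_eq_mul, monomial_mul, mul_one, hA, hsub0]
      have hc'i1 : c' i1 = c i1 + monomial (s - eS (F i1)) lam := by
        rw [hc']
        simp only [Pi.sub_apply, Pi.smul_apply, ht2, smul_eq_mul, mul_neg, sub_neg_eq_add,
          monomial_mul, mul_one, hB]
      have hc'other : ∀ i, i ≠ i0 → i ≠ i1 → c' i = c i := by
        intro i h1 h2
        rw [hc']
        have e1 : taylor (k := k) F i0 i1 i = 0 := by
          simp [taylor, Pi.single_eq_of_ne h1, Pi.single_eq_of_ne h2]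
        simp [e1]
      have hcard : ∀ i, (c' i).support.card ≤ (c i).support.card := by
        intro i
        by_cases h1 : i = i0
        · subst h1
          rw [hc'i0, hlam, support_sub_monomial_coeff]
          exact Finset.card_le_card (Finset.erase_subset _ _)
        · by_cases h2 : i = i1
          · subst h2
            rw [hc'i1]
            refine Finset.card_le_card (support_add_monomial_mem ?_)
            rwa [MvPolynomial.mem_support_iff]
          · rw [hc'other i h1 h2]
      have hlt : (∑ i, (c' i).support.card) < ∑ i, (c i).support.card := by
        refine Finset.sum_lt_sum (fun i _ => hcard i) ⟨i0, Finset.mem_univ i0, ?_⟩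
        rw [hc'i0, hlam, support_sub_monomial_coeff]
        refine Finset.card_erase_lt_of_mem ?_
        rwa [MvPolynomial.mem_support_iff]
      have hmem : taylor (k := k) F i0 i1 ∈ Submodule.span (MvPolynomial (Fin n) k)
          {w : Fin m → MvPolynomial (Fin n) k | ∃ i j, w = taylor F i j} :=
        Submodule.subset_span ⟨i0, i1, rfl⟩
      have hrw : c = c' + (monomial w lam) • taylor F i0 i1 := by rw [hc']; ring
      rw [hrw]
      exact Submodule.add_mem _ (ih c' (by omega) hphi') (Submodule.smul_mem _ _ hmem)


/-! ### Graph lemmas -/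

section Graph

variable {V : Type*} {G : SimpleGraph V}

lemma exists_subwalk {u v : V} (p : G.Walk u v) (hp : p.IsPath) :
    ∀ a b c : ℕ, a ≤ b → b ≤ c → c ≤ p.length →
    ∃ (x z : V) (q : G.Walk x z), x = p.getVert a ∧ z = p.getVert c ∧ q.IsPath ∧
      p.getVert b ∈ q.support ∧ q.support ⊆ p.support := by
  induction p with
  | nil =>
    intro a b c hab hbc hc
    simp only [SimpleGraph.Walk.length_nil, Nat.le_zero] at hc
    have ha : a = 0 := by omega
    have hb : b = 0 := by omega
    subst hc; subst ha; subst hb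
    exact ⟨_, _, SimpleGraph.Walk.nil, rfl, rfl, SimpleGraph.Walk.IsPath.nil, by simp, by simp⟩
  | @cons u' w' v' h p ih =>
    intro a b c hab hbc hc
    have hp : (SimpleGraph.Walk.cons h p).IsPath := hp
    have hp' : p.IsPath := hp.of_cons
    cases c with
    | zero =>
      have ha : a = 0 := by omega
      have hb : b = 0 := by omega
      subst ha; subst hb
      exact ⟨_, _, SimpleGraph.Walk.nil, rfl, rfl, SimpleGraph.Walk.IsPath.nil, by simp, by simp⟩
    | succ c =>
      cases a with
      | zero =>
        obtain ⟨x, z, q, hx, hz, hq, hmem, hsub⟩ :=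
          ih hp' 0 (b - 1) c (Nat.zero_le _) (by omega)
            (by simpa using hc)
        have hxw : x = w' := by rw [hx, SimpleGraph.Walk.getVert_zero]
        subst hxw
        refine ⟨u', z, SimpleGraph.Walk.cons h q, by simp, ?_, ?_, ?_, ?_⟩
        · rw [hz, SimpleGraph.Walk.getVert_cons_succ]
        · rw [SimpleGraph.Walk.cons_isPath_iff]
          exact ⟨hq, fun hin => ((SimpleGraph.Walk.cons_isPath_iff _ _).mp hp).2 (hsub hin)⟩
        · cases b with
          | zero => simp
          | succ b =>
            rw [SimpleGraph.Walk.getVert_cons_succ]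
            rw [SimpleGraph.Walk.support_cons]
            exact List.mem_cons_of_mem _ (by simpa using hmem)
        · rw [SimpleGraph.Walk.support_cons, SimpleGraph.Walk.support_cons]
          exact List.cons_subset_cons _ hsub
      | succ a =>
        have hb' : ∃ b', b = b' + 1 := ⟨b - 1, by omega⟩
        obtain ⟨b', rfl⟩ := hb'
        obtain ⟨x, z, q, hx, hz, hq, hmem, hsub⟩ :=
          ih hp' a b' c (by omega) (by omega) (by simpa using hc)
        refine ⟨x, z, q, ?_, ?_, hq, ?_, ?_⟩
        · rw [hx, SimpleGraph.Walk.getVert_cons_succ]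
        · rw [hz, SimpleGraph.Walk.getVert_cons_succ]
        · rw [SimpleGraph.Walk.getVert_cons_succ]; exact hmem
        · rw [SimpleGraph.Walk.support_cons]
          exact fun x hx => List.mem_cons_of_mem _ (hsub hx)

lemma reachable_induce_of_support {s : Set V} {u v : V} (p : G.Walk u v)
    (hsupp : ∀ x ∈ p.support, x ∈ s) :
    ∀ (hu : u ∈ s) (hv : v ∈ s), (G.induce s).Reachable ⟨u, hu⟩ ⟨v, hv⟩ := by
  induction p with
  | nil => intro hu hv; exact SimpleGraph.Reachable.refl _
  | @cons u' w' v' h p ih =>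
    intro hu hv
    have hw : w' ∈ s := hsupp w' (by simp)
    have hadj : (G.induce s).Adj ⟨u', hu⟩ ⟨w', hw⟩ := by
      simp only [SimpleGraph.comap_adj, Function.Embedding.coe_subtype]
      exact h
    exact hadj.reachable.trans (ih (fun x hx => hsupp x (by simp [hx])) hw hv)

lemma walk_in_induce {s : Set V} {x y : ↑s} (q : (G.induce s).Walk x y) :
    ∃ p : G.Walk x.1 y.1, ∀ v ∈ p.support, v ∈ s := by
  refine ⟨q.map (SimpleGraph.Embedding.induce s).toHom, fun v hv => ?_⟩
  erw [SimpleGraph.Walk.support_map, List.mem_map] at hv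
  obtain ⟨⟨v', hv'⟩, _, rfl⟩ := hv
  exact hv'

end Graph

/-! ### Telescoping along walks in induced subgraphs -/

variable {d : ℕ}

lemma edge_span (F : Fin m → Finset (Fin n)) (hcard : ∀ i, (F i).card = d)
    {T : Finset (Fin n)} {x z : Fin m} (hadj : (syzGraph F d).Adj x z)
    (hxT : F x ⊆ T) (hzT : F z ⊆ T) :
    (Pi.single x (monomial (eS (T \ F x)) (1:k)) : Fin m → MvPolynomial (Fin n) k) -
        Pi.single z (monomial (eS (T \ F z)) 1)
      ∈ Submodule.span (MvPolynomial (Fin n) k) (linSyz (uF F)) := by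
  obtain ⟨hne, hd⟩ := hadj
  have hic : (F z ∩ F x).card = (F x ∩ F z).card := by rw [Finset.inter_comm]
  have h1 : (F z \ F x).card = 1 := by
    have h2 := Finset.card_inter_add_card_sdiff (F z) (F x)
    rw [hic, hcard z] at h2
    omega
  have h1' : (F x \ F z).card = 1 := by
    have h2 := Finset.card_inter_add_card_sdiff (F x) (F z)
    rw [hcard x] at h2
    omega
  obtain ⟨a, ha⟩ := Finset.card_eq_one.mp h1
  obtain ⟨b, hb⟩ := Finset.card_eq_one.mp h1'
  have hmem_a : ∀ t, (t ∈ F z ∧ t ∉ F x) ↔ t = a := by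
    intro t; rw [← Finset.mem_sdiff, ha, Finset.mem_singleton]
  have hmem_b : ∀ t, (t ∈ F x ∧ t ∉ F z) ↔ t = b := by
    intro t; rw [← Finset.mem_sdiff, hb, Finset.mem_singleton]
  have haz : a ∈ F z ∧ a ∉ F x := (hmem_a a).mpr rfl
  have hbx : b ∈ F x ∧ b ∉ F z := (hmem_b b).mpr rfl
  have hins_a : insert a (F x) = F x ∪ F z := by
    ext t
    simp only [Finset.mem_insert, Finset.mem_union]
    have h3 := hmem_a t
    tauto
  have hins_b : insert b (F z) = F x ∪ F z := by
    ext t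
    simp only [Finset.mem_insert, Finset.mem_union]
    have h3 := hmem_b t
    tauto
  have hXa : X a * uF F x = monomial (eS (F x ∪ F z)) (1:k) := by
    rw [show uF (k := k) F x = monomial (eS (F x)) 1 from rfl, X, monomial_mul, one_mul,
      ← eS_insert haz.2, hins_a]
  have hXb : X b * uF F z = monomial (eS (F x ∪ F z)) (1:k) := by
    rw [show uF (k := k) F z = monomial (eS (F z)) 1 from rfl, X, monomial_mul, one_mul,
      ← eS_insert hbx.2, hins_b]
  have hlin : (Pi.single x (X a) : Fin m → MvPolynomial (Fin n) k) - Pi.single z (X b)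
      ∈ linSyz (uF (k := k) F) :=
    ⟨x, z, a, b, hXa.trans hXb.symm, rfl⟩
  have hins_a2 : insert a (T \ (F x ∪ F z)) = T \ F x := by
    ext t
    simp only [Finset.mem_insert, Finset.mem_sdiff, Finset.mem_union]
    have h3 := hmem_a t
    have h4 : t ∈ F z → t ∈ T := fun h => hzT h
    have h5 : a ∈ T := hzT haz.1
    tauto
  have hins_b2 : insert b (T \ (F x ∪ F z)) = T \ F z := by
    ext t
    simp only [Finset.mem_insert, Finset.mem_sdiff, Finset.mem_union]
    have h3 := hmem_b t
    have h4 : t ∈ F x → t ∈ T := fun h => hxT h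
    have h5 : b ∈ T := hxT hbx.1
    tauto
  have hma : monomial (eS (T \ (F x ∪ F z))) (1:k) * X a = monomial (eS (T \ F x)) 1 := by
    rw [X, monomial_mul, mul_one, add_comm, ← eS_insert (by simp [Finset.mem_sdiff, haz.1]),
      hins_a2]
  have hmb : monomial (eS (T \ (F x ∪ F z))) (1:k) * X b = monomial (eS (T \ F z)) 1 := by
    rw [X, monomial_mul, mul_one, add_comm, ← eS_insert (by simp [Finset.mem_sdiff, hbx.1]),
      hins_b2]
  have heq : (Pi.single x (monomial (eS (T \ F x)) (1:k)) : Fin m → MvPolynomial (Fin n) k) -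
        Pi.single z (monomial (eS (T \ F z)) 1)
      = monomial (eS (T \ (F x ∪ F z))) (1:k) •
        ((Pi.single x (X a) : Fin m → MvPolynomial (Fin n) k) - Pi.single z (X b)) := by
    rw [smul_sub, smul_single, smul_single, hma, hmb]
  rw [heq]
  exact Submodule.smul_mem _ _ (Submodule.subset_span hlin)

lemma walk_span (F : Fin m → Finset (Fin n)) (hcard : ∀ i, (F i).card = d)
    (T : Finset (Fin n)) :
    ∀ {x y : ↑{w : Fin m | F w ⊆ T}}
      (_ : ((syzGraph F d).induce {w : Fin m | F w ⊆ T}).Walk x y),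
    (Pi.single x.1 (monomial (eS (T \ F x.1)) (1:k)) : Fin m → MvPolynomial (Fin n) k) -
        Pi.single y.1 (monomial (eS (T \ F y.1)) 1)
      ∈ Submodule.span (MvPolynomial (Fin n) k) (linSyz (uF F)) := by
  intro x y q
  induction q with
  | nil => rw [sub_self]; exact Submodule.zero_mem _
  | @cons x z y hadj q ih =>
    have hGadj : (syzGraph F d).Adj x.1 z.1 := by simpa using hadj
    have step := edge_span (k := k) F hcard hGadj x.2 z.2
    have h2 := Submodule.add_mem _ step ih
    rwa [sub_add_sub_cancel] at h2

lemma taylor_mem (F : Fin m → Finset (Fin n)) (hcard : ∀ i, (F i).card = d) (i j : Fin m)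
    (hconn : ((syzGraph F d).induce {w : Fin m | F w ⊆ F i ∪ F j}).Connected) :
    taylor (k := k) F i j ∈ Submodule.span (MvPolynomial (Fin n) k) (linSyz (uF F)) := by
  have hi : i ∈ {w : Fin m | F w ⊆ F i ∪ F j} := Finset.subset_union_left
  have hj : j ∈ {w : Fin m | F w ⊆ F i ∪ F j} := Finset.subset_union_right
  obtain ⟨q⟩ := hconn.preconnected ⟨i, hi⟩ ⟨j, hj⟩
  have h1 := walk_span (k := k) F hcard (F i ∪ F j) q
  have e1 : (F i ∪ F j) \ F i = F j \ F i := by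
    ext t; simp only [Finset.mem_sdiff, Finset.mem_union]; tauto
  have e2 : (F i ∪ F j) \ F j = F i \ F j := by
    ext t; simp only [Finset.mem_sdiff, Finset.mem_union]; tauto
  rw [e1, e2] at h1
  rw [taylor]
  exact h1

/-! ### The theta functional: obstruction to linear relations -/

noncomputable def theta (F : Fin m → Finset (Fin n)) (A : Set (Fin m)) (T : Finset (Fin n))
    (c : Fin m → MvPolynomial (Fin n) k) : k :=
  ∑ p ∈ Finset.univ.filter (fun p => p ∈ A), coeff (eS (T \ F p)) (c p)

lemma theta_sub (F : Fin m → Finset (Fin n)) (A : Set (Fin m)) (T : Finset (Fin n))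
    (c1 c2 : Fin m → MvPolynomial (Fin n) k) :
    theta F A T (c1 - c2) = theta F A T c1 - theta F A T c2 := by
  simp [theta, Finset.sum_sub_distrib]

lemma theta_add (F : Fin m → Finset (Fin n)) (A : Set (Fin m)) (T : Finset (Fin n))
    (c1 c2 : Fin m → MvPolynomial (Fin n) k) :
    theta F A T (c1 + c2) = theta F A T c1 + theta F A T c2 := by
  simp [theta, Finset.sum_add_distrib]

lemma theta_single (F : Fin m → Finset (Fin n)) (A : Set (Fin m)) (T : Finset (Fin n))
    (p : Fin m) (q : MvPolynomial (Fin n) k) :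
    theta F A T (Pi.single p q) = if p ∈ A then coeff (eS (T \ F p)) q else 0 := by
  rw [theta]
  by_cases hp : p ∈ A
  · rw [Finset.sum_eq_single p, if_pos hp, Pi.single_eq_same]
    · intro j _ hj; rw [Pi.single_eq_of_ne hj, coeff_zero]
    · intro h; exact absurd (Finset.mem_filter.mpr ⟨Finset.mem_univ p, hp⟩) h
  · rw [if_neg hp, Finset.sum_eq_zero]
    intro j hj
    have hjp : j ≠ p := by
      rintro rfl
      exact hp (Finset.mem_filter.mp hj).2
    rw [Pi.single_eq_of_ne hjp, coeff_zero]

lemma transfer {F : Fin m → Finset (Fin n)} (hinj : Function.Injective F)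
    (hcard : ∀ i, (F i).card = d) {T : Finset (Fin n)} {A : Set (Fin m)}
    (hA1 : ∀ p ∈ A, F p ⊆ T)
    (hA2 : ∀ p q, p ∈ A → (syzGraph F d).Adj p q → F q ⊆ T → q ∈ A)
    {i' j' : Fin m} {a b : Fin n}
    (hg : Finsupp.single a 1 + eS (F i') = Finsupp.single b 1 + eS (F j'))
    (hiA : i' ∈ A) (haT : a ∈ T \ F i') :
    j' ∈ A ∧ b ∈ T \ F j' ∧
      eS (T \ F i') - Finsupp.single a 1 = eS (T \ F j') - Finsupp.single b 1 := by
  have haT' := Finset.mem_sdiff.mp haT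
  by_cases hab : a = b
  · subst hab
    have hFF : F i' = F j' := eS_inj (add_left_cancel hg)
    have hij : i' = j' := hinj hFF
    subst hij
    exact ⟨hiA, haT, rfl⟩
  · have hbj : b ∈ F i' ∧ b ∉ F j' := by
      have h := congrArg (fun g => g b) hg
      simp only [Finsupp.add_apply, Finsupp.single_apply, eS_apply, if_true, zero_add] at h
      split_ifs at h with h1 h2 h3 h4 h5 h6 h7 h8 <;>
        first
          | (constructor <;> assumption)
          | omega
          | (exfalso; exact hab (by assumption))
          | (exfalso; exact haT'.2 (by assumption))
    have haj : a ∈ F j' := by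
      have h := congrArg (fun g => g a) hg
      simp only [Finsupp.add_apply, Finsupp.single_apply, eS_apply, if_true, zero_add] at h
      split_ifs at h with h1 h2 h3 h4 h5 h6 h7 h8 <;>
        first
          | assumption
          | omega
          | (exfalso; exact haT'.2 (by assumption))
          | (exfalso; exact hab (Eq.symm (by assumption)))
    have hins : insert a (F i') = insert b (F j') := by
      apply eS_inj
      rw [eS_insert haT'.2, eS_insert hbj.2]
      exact hg
    have hij : i' ≠ j' := by
      rintro rfl
      have h1 : a ∈ insert b (F i') := hins ▸ Finset.mem_insert_self a (F i')
      rcases Finset.mem_insert.mp h1 with h | h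
      · exact hab h
      · exact haT'.2 h
    have hFj'T : F j' ⊆ T := by
      intro t ht
      have h1 : t ∈ insert a (F i') := hins ▸ Finset.mem_insert_of_mem ht
      rcases Finset.mem_insert.mp h1 with h | h
      · exact h ▸ haT'.1
      · exact hA1 i' hiA h
    have hbT : b ∈ T := by
      have h1 : b ∈ insert a (F i') := hins ▸ Finset.mem_insert_self b (F j')
      rcases Finset.mem_insert.mp h1 with h | h
      · exact absurd h.symm hab
      · exact hA1 i' hiA h
    have hbFi : b ∈ F i' := hbj.1
    have hinter : F i' ∩ F j' = (F i').erase b := by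
      ext t
      simp only [Finset.mem_inter, Finset.mem_erase]
      constructor
      · rintro ⟨h1, h2⟩; exact ⟨fun hh => hbj.2 (hh ▸ h2), h1⟩
      · rintro ⟨h1, h2⟩
        refine ⟨h2, ?_⟩
        have h3 : t ∈ insert b (F j') := hins ▸ Finset.mem_insert_of_mem h2
        rcases Finset.mem_insert.mp h3 with h | h
        · exact absurd h h1
        · exact h
    have hdpos : 0 < d := by
      rw [← hcard i']; exact Finset.card_pos.mpr ⟨b, hbFi⟩
    have hadj : (syzGraph F d).Adj i' j' := by
      refine ⟨hij, ?_⟩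
      rw [hinter, Finset.card_erase_of_mem hbFi, hcard]
      omega
    refine ⟨hA2 i' j' hiA hadj hFj'T, Finset.mem_sdiff.mpr ⟨hbT, hbj.2⟩, ?_⟩
    rw [← eS_sub, ← eS_sub, tsub_tsub, tsub_tsub, add_comm (eS (F i')), add_comm (eS (F j')), hg]

lemma theta_vanish {F : Fin m → Finset (Fin n)} (hinj : Function.Injective F)
    (hcard : ∀ i, (F i).card = d) {T : Finset (Fin n)} {A : Set (Fin m)}
    (hA1 : ∀ p ∈ A, F p ⊆ T)
    (hA2 : ∀ p q, p ∈ A → (syzGraph F d).Adj p q → F q ⊆ T → q ∈ A)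
    {c : Fin m → MvPolynomial (Fin n) k}
    (hc : c ∈ Submodule.span (MvPolynomial (Fin n) k) (linSyz (uF F))) :
    theta F A T c = 0 := by
  have main : ∀ f : MvPolynomial (Fin n) k, theta F A T (f • c) = 0 := by
    induction hc using Submodule.span_induction with
    | mem w hw =>
      intro f
      obtain ⟨i', j', a, b, heq, rfl⟩ := hw
      have hg : Finsupp.single a 1 + eS (F i') = Finsupp.single b 1 + eS (F j') := by
        apply eq_of_monomial_one_eq (k := k)
        have h1 : X a * uF (k := k) F i' = monomial (Finsupp.single a 1 + eS (F i')) 1 := by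
          rw [show uF (k := k) F i' = monomial (eS (F i')) 1 from rfl, X, monomial_mul, one_mul]
        have h2 : X b * uF (k := k) F j' = monomial (Finsupp.single b 1 + eS (F j')) 1 := by
          rw [show uF (k := k) F j' = monomial (eS (F j')) 1 from rfl, X, monomial_mul, one_mul]
        rw [← h1, ← h2, heq]
      have hsw : f • ((Pi.single i' (X a) : Fin m → MvPolynomial (Fin n) k) - Pi.single j' (X b))
          = (Pi.single i' (f * X a) : Fin m → MvPolynomial (Fin n) k) - Pi.single j' (f * X b) := by
        rw [smul_sub, smul_single, smul_single]
      rw [hsw, theta_sub, theta_single, theta_single]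
      have hterm : ∀ (p : Fin m) (v : Fin n),
          (if p ∈ A then coeff (eS (T \ F p)) (f * X v) else 0)
            = if p ∈ A ∧ v ∈ T \ F p then coeff (eS (T \ F p) - Finsupp.single v 1) f else 0 := by
        intro p v
        by_cases h1 : p ∈ A
        · rw [if_pos h1, MvPolynomial.coeff_mul_X', eS_support]
          by_cases h2 : v ∈ T \ F p
          · rw [if_pos h2, if_pos ⟨h1, h2⟩]
          · rw [if_neg h2, if_neg (fun hh => h2 hh.2)]
        · rw [if_neg h1, if_neg (fun hh => h1 hh.1)]
      rw [hterm, hterm]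
      by_cases h1 : i' ∈ A ∧ a ∈ T \ F i'
      · obtain ⟨hjA, hbT, hexp⟩ := transfer hinj hcard hA1 hA2 hg h1.1 h1.2
        rw [if_pos h1, if_pos ⟨hjA, hbT⟩, hexp, sub_self]
      · have h2 : ¬(j' ∈ A ∧ b ∈ T \ F j') := by
          intro h2
          obtain ⟨hiA', haT', -⟩ := transfer hinj hcard hA1 hA2 hg.symm h2.1 h2.2
          exact h1 ⟨hiA', haT'⟩
        rw [if_neg h1, if_neg h2, sub_self]
    | zero =>
      intro f
      rw [smul_zero]
      simp [theta]
    | add x y hx hy ihx ihy =>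
      intro f
      rw [smul_add, theta_add, ihx f, ihy f, add_zero]
    | smul r x hx ihx =>
      intro f
      rw [smul_smul]
      exact ihx (f * r)
  have h1 := main 1
  rwa [one_smul] at h1

lemma connected_of_linrel {F : Fin m → Finset (Fin n)} (hinj : Function.Injective F)
    (hcard : ∀ i, (F i).card = d)
    (hlin : HasLinRel (uF (k := k) F)) (i j : Fin m) :
    ((syzGraph F d).induce {w : Fin m | F w ⊆ F i ∪ F j}).Connected := by
  by_contra hdis
  set T := F i ∪ F j with hT
  have hiS : i ∈ {w : Fin m | F w ⊆ T} := Finset.subset_union_left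
  have hne : Nonempty ↥{w : Fin m | F w ⊆ T} := ⟨⟨i, hiS⟩⟩
  have hpre : ¬ ((syzGraph F d).induce {w : Fin m | F w ⊆ T}).Preconnected :=
    fun h => hdis ((SimpleGraph.connected_iff _).mpr ⟨h, hne⟩)
  obtain ⟨x', y', hnr⟩ : ∃ x' y',
      ¬ ((syzGraph F d).induce {w : Fin m | F w ⊆ T}).Reachable x' y' := by
    by_contra hcon
    push_neg at hcon
    exact hpre fun u v => hcon u v
  set A : Set (Fin m) := {w | ∃ h : w ∈ {w : Fin m | F w ⊆ T},
    ((syzGraph F d).induce {w : Fin m | F w ⊆ T}).Reachable x' ⟨w, h⟩} with hA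
  have hA1 : ∀ p ∈ A, F p ⊆ T := fun p hp => hp.elim fun h _ => h
  have hA2 : ∀ p q, p ∈ A → (syzGraph F d).Adj p q → F q ⊆ T → q ∈ A := by
    intro p q hp hadj hq
    obtain ⟨h, hr⟩ := hp
    refine ⟨hq, hr.trans (SimpleGraph.Adj.reachable ?_)⟩
    simp only [SimpleGraph.comap_adj, Function.Embedding.coe_subtype]
    exact hadj
  have hxA : x'.1 ∈ A := ⟨x'.2, SimpleGraph.Reachable.refl _⟩
  have hyA : y'.1 ∉ A := fun hy => hnr (hy.elim fun h hr => hr)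
  set sig : Fin m → MvPolynomial (Fin n) k :=
    (Pi.single x'.1 (monomial (eS (T \ F x'.1)) (1:k)) : Fin m → MvPolynomial (Fin n) k) -
      Pi.single y'.1 (monomial (eS (T \ F y'.1)) 1) with hsig
  have hker : phi (uF F) sig = 0 := by
    rw [hsig, map_sub, phi_single, phi_single,
      show uF (k := k) F x'.1 = monomial (eS (F x'.1)) 1 from rfl,
      show uF (k := k) F y'.1 = monomial (eS (F y'.1)) 1 from rfl,
      monomial_mul, mul_one, ← eS_union_disjoint sdiff_disjoint,
      Finset.sdiff_union_of_subset x'.2,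
      monomial_mul, mul_one, ← eS_union_disjoint sdiff_disjoint,
      Finset.sdiff_union_of_subset y'.2, sub_self]
  have hspan : sig ∈ Submodule.span (MvPolynomial (Fin n) k) (linSyz (uF (k := k) F)) := by
    rw [HasLinRel] at hlin
    rw [hlin]
    exact LinearMap.mem_ker.mpr hker
  have hth := theta_vanish hinj hcard hA1 hA2 hspan
  rw [hsig, theta_sub, theta_single, theta_single, if_pos hxA, if_neg hyA,
    coeff_monomial, if_pos rfl, sub_zero] at hth
  exact one_ne_zero hth

lemma linrel_of_connected {F : Fin m → Finset (Fin n)} (hcard : ∀ i, (F i).card = d)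
    (hconn : ∀ i j, ((syzGraph F d).induce {w : Fin m | F w ⊆ F i ∪ F j}).Connected) :
    HasLinRel (uF (k := k) F) := by
  rw [HasLinRel]
  apply le_antisymm
  · rw [Submodule.span_le]
    rintro w ⟨i', j', a, b, heq, rfl⟩
    rw [SetLike.mem_coe, LinearMap.mem_ker, map_sub, phi_single, phi_single, heq, sub_self]
  · intro c hc
    rw [LinearMap.mem_ker] at hc
    have h1 := ker_le_span_taylor (k := k) F (∑ i, (c i).support.card) c (le_refl _) hc
    refine Submodule.span_le.mpr ?_ h1
    rintro w ⟨i, j, rfl⟩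
    exact taylor_mem F hcard i j (hconn i j)

lemma cond3_of_cond2 {F : Fin m → Finset (Fin n)} (htree : (syzGraph F d).IsTree)
    (hconn : ∀ i j, ((syzGraph F d).induce {w : Fin m | F w ⊆ F i ∪ F j}).Connected) :
    ∀ (i j : Fin m) (p : (syzGraph F d).Walk i j), p.IsPath →
      ∀ a b c : ℕ, a ≤ b → b ≤ c → c ≤ p.length →
        F (p.getVert b) ⊆ F (p.getVert a) ∪ F (p.getVert c) := by
  intro i j p hp a b c hab hbc hc
  obtain ⟨x, z, q, hx, hz, hq, hmemb, -⟩ := exists_subwalk p hp a b c hab hbc hc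
  subst hx; subst hz
  have hxS : p.getVert a ∈ {w : Fin m | F w ⊆ F (p.getVert a) ∪ F (p.getVert c)} :=
    Finset.subset_union_left
  have hzS : p.getVert c ∈ {w : Fin m | F w ⊆ F (p.getVert a) ∪ F (p.getVert c)} :=
    Finset.subset_union_right
  obtain ⟨r'⟩ := (hconn (p.getVert a) (p.getVert c)).preconnected ⟨_, hxS⟩ ⟨_, hzS⟩
  obtain ⟨r, hr⟩ := walk_in_induce r'
  have hpq : (⟨q, hq⟩ : (syzGraph F d).Path (p.getVert a) (p.getVert c)) = r.toPath :=
    htree.IsAcyclic.path_unique _ _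
  have hval : q = (r.toPath : (syzGraph F d).Walk _ _) := congrArg Subtype.val hpq
  have hmem2 : p.getVert b ∈ r.support :=
    (SimpleGraph.Walk.support_toPath_subset r) (hval ▸ hmemb)
  exact hr _ hmem2

lemma cond2_of_cond3 {F : Fin m → Finset (Fin n)} (htree : (syzGraph F d).IsTree)
    (h3 : ∀ (i j : Fin m) (p : (syzGraph F d).Walk i j), p.IsPath →
      ∀ a b c : ℕ, a ≤ b → b ≤ c → c ≤ p.length →
        F (p.getVert b) ⊆ F (p.getVert a) ∪ F (p.getVert c)) :
    ∀ i j, ((syzGraph F d).induce {w : Fin m | F w ⊆ F i ∪ F j}).Connected := by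
  intro i j
  have hiS : i ∈ {w : Fin m | F w ⊆ F i ∪ F j} := Finset.subset_union_left
  have hjS : j ∈ {w : Fin m | F w ⊆ F i ∪ F j} := Finset.subset_union_right
  have key : ∀ (w : Fin m) (hw : w ∈ {w : Fin m | F w ⊆ F i ∪ F j}),
      ((syzGraph F d).induce {w : Fin m | F w ⊆ F i ∪ F j}).Reachable ⟨w, hw⟩ ⟨i, hiS⟩ := by
    intro w hw
    obtain ⟨r0⟩ := htree.isConnected.preconnected w i
    have hp2 := r0.toPath.2
    have hsupp : ∀ v ∈ (r0.toPath : (syzGraph F d).Walk w i).support,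
        v ∈ {w : Fin m | F w ⊆ F i ∪ F j} := by
      intro v hv
      obtain ⟨b, hb1, hb2⟩ := SimpleGraph.Walk.mem_support_iff_exists_getVert.mp hv
      have h4 := h3 w i (r0.toPath : (syzGraph F d).Walk w i) hp2
        0 b (r0.toPath : (syzGraph F d).Walk w i).length (Nat.zero_le _) hb2 (le_refl _)
      rw [SimpleGraph.Walk.getVert_zero, SimpleGraph.Walk.getVert_length, hb1] at h4
      exact h4.trans (Finset.union_subset hw Finset.subset_union_left)
    exact reachable_induce_of_support _ hsupp hw hiS
  refine (SimpleGraph.connected_iff _).mpr ⟨?_, ⟨⟨i, hiS⟩⟩⟩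
  intro x y
  exact (key x.1 x.2).trans (key y.1 y.2).symm

end Stmt10Aux

/-- Suppose `G_I` is a tree. Then the following are equivalent:
(i) `I` has linear relations; (ii) the induced subgraph `G_I^{(u,v)}` is connected for all
generators `u, v`; (iii) along the (unique) path between any two generators in `G_I`,
the support of every intermediate vertex is contained in the union of the supports of
any earlier and any later vertex. -/
theorem stmt10 {k : Type*} [Field k] {n m d : ℕ}
    (F : Fin m → Finset (Fin n)) (hinj : Function.Injective F)
    (hcard : ∀ i, (F i).card = d)
    (htree : (syzGraph F d).IsTree) :
    (HasLinRel (fun i : Fin m => ∏ l ∈ F i, (X l : MvPolynomial (Fin n) k)) ↔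
      ∀ i j : Fin m,
        ((syzGraph F d).induce {w : Fin m | F w ⊆ F i ∪ F j}).Connected) ∧
    (HasLinRel (fun i : Fin m => ∏ l ∈ F i, (X l : MvPolynomial (Fin n) k)) ↔
      ∀ (i j : Fin m) (p : (syzGraph F d).Walk i j), p.IsPath →
        ∀ a b c : ℕ, a ≤ b → b ≤ c → c ≤ p.length →
          F (p.getVert b) ⊆ F (p.getVert a) ∪ F (p.getVert c)) := by
  have huF : (fun i : Fin m => ∏ l ∈ F i, (X l : MvPolynomial (Fin n) k))
      = Stmt10Aux.uF F := funext fun i => Stmt10Aux.prod_X_eq _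
  rw [huF]
  have hiff1 : HasLinRel (Stmt10Aux.uF (k := k) F) ↔
      ∀ i j : Fin m, ((syzGraph F d).induce {w : Fin m | F w ⊆ F i ∪ F j}).Connected :=
    ⟨fun h i j => Stmt10Aux.connected_of_linrel hinj hcard h i j,
     fun h => Stmt10Aux.linrel_of_connected hcard h⟩
  refine ⟨hiff1, ?_⟩
  rw [hiff1]
  exact ⟨fun h => Stmt10Aux.cond3_of_cond2 htree h, fun h => Stmt10Aux.cond2_of_cond3 htree h⟩
end
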